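/- Let (c_n), (t_n) be complex sequences with |t_n| → ∞, no finite limit points, (t_n) of finite exponent of convergence ρ, and sup_n |c_n|/|t_n| < ∞. Then for 0 < p < 1/2, the quantity X(r) = ∫₀^{2π} | ∑_{r/√2 ≤ |t_n| ≤ r√2} c_n/(re^{iφ} − t_n)² |^p dφ satisfies X(r) = o(r^{ρ+1−p}) as r → ∞. -/

import Mathlib

open Complex MeasureTheory Real Filter
open scoped Classical
open scoped NNReal Topology

/-!
On the annulus `r/√2 ≤ |t| ≤ r√2` we have `|c_n| ≲ r`, and the kernel `|re^{iφ} - t|^{-2p}` has an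
integrable singularity (`2p < 1`) whose integral over the circle is `O(r^{-2p})`. Since `x ↦ x^p`
is subadditive, `X(r) ≲ r^{-p} · #{n in the annulus}`, and each such `n` contributes at least
`(r√2)^{-(ρ+1)}` to the tail `∑_{|t_n| ≥ r/√2} |t_n|^{-(ρ+1)}`, which tends to `0`.
-/

theorem NNReal.rpow_sum_le_sum_rpow {ι : Type*} (s : Finset ι) (f : ι → ℝ≥0) {p : ℝ}
    (hp : 0 < p) (hp1 : p ≤ 1) : (∑ i ∈ s, f i) ^ p ≤ ∑ i ∈ s, f i ^ p :=
  Finset.le_sum_of_subadditive (· ^ p) (NNReal.zero_rpow hp.ne').le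
    (fun x y => NNReal.rpow_add_le_add_rpow x y hp.le hp1) s f

theorem norm_sum_rpow_le_sum_norm_rpow {ι E : Type*} [SeminormedAddCommGroup E] (s : Finset ι)
    (z : ι → E) {p : ℝ} (hp : 0 < p) (hp1 : p ≤ 1) :
    ‖∑ i ∈ s, z i‖ ^ p ≤ ∑ i ∈ s, ‖z i‖ ^ p :=
  calc ‖∑ i ∈ s, z i‖ ^ p ≤ (∑ i ∈ s, ‖z i‖) ^ p :=
        Real.rpow_le_rpow (norm_nonneg _) (norm_sum_le _ _) hp.le
    _ ≤ ∑ i ∈ s, ‖z i‖ ^ p := by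
        simpa using NNReal.coe_le_coe.2 (NNReal.rpow_sum_le_sum_rpow s (‖z ·‖₊) hp hp1)

theorem Real.rpow_neg_two_mul {x : ℝ} (hx : 0 ≤ x) (p : ℝ) : x ^ (-(2 * p)) = (x ^ 2) ^ (-p) := by
  rw [← Real.rpow_natCast, ← Real.rpow_mul hx]
  norm_num

theorem norm_div_sq_rpow (c w : ℂ) (p : ℝ) : ‖c / w ^ 2‖ ^ p = ‖c‖ ^ p * ‖w‖ ^ (-(2 * p)) := by
  rw [norm_div, norm_pow, Real.div_rpow (norm_nonneg c) (by positivity), div_eq_mul_inv,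
    ← Real.rpow_neg (by positivity), Real.rpow_neg_two_mul (norm_nonneg w)]

theorem Summable.tendsto_tsum_ite_le_zero {ι : Type*} {f : ι → ℝ} (hf : Summable f) (a : ι → ℝ) :
    Tendsto (fun R => ∑' i, if R ≤ a i then f i else 0) atTop (𝓝 0) := by
  simpa using tendsto_tsum_of_dominated_convergence (f := fun R i => if R ≤ a i then f i else 0)
    (g := fun _ => 0) hf.abs
    (fun i => tendsto_const_nhds.congr' <| (eventually_gt_atTop (a i)).mono fun R hR => by
      simp [not_le.2 hR])
    (Eventually.of_forall fun R i => by split_ifs <;> simp)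

theorem pos_of_summable_one_div_rpow {u : ℕ → ℝ} {s : ℝ} (hu : Tendsto u atTop atTop)
    (hs : Summable fun n => 1 / u n ^ s) : 0 < s := by
  by_contra! hs0
  obtain ⟨n, hn_small, hn_large⟩ :=
    ((hs.tendsto_atTop_zero.eventually_lt_const one_pos).and (hu.eventually_ge_atTop 1)).exists
  have : u n ^ s ≤ 1 := Real.rpow_le_one_of_one_le_of_nonpos hn_large hs0
  rw [div_lt_one (by positivity)] at hn_small
  linarith

theorem norm_ofReal_mul_exp_sub_ofReal_sq (r s x : ℝ) :
    ‖(r : ℂ) * exp (x * I) - s‖ ^ 2 = r ^ 2 + s ^ 2 - 2 * r * s * Real.cos x := by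
  rw [Complex.sq_norm, Complex.normSq_apply]
  simp only [sub_re, sub_im, mul_re, mul_im, ofReal_re, ofReal_im, exp_ofReal_mul_I_re,
    exp_ofReal_mul_I_im]
  nlinarith [Real.sin_sq_add_cos_sq x]

theorem norm_ofReal_mul_exp_add_arg_sub (r x : ℝ) (t : ℂ) :
    ‖(r : ℂ) * exp ((x + t.arg : ℝ) * I) - t‖ = ‖(r : ℂ) * exp (x * I) - ‖t‖‖ := by
  have hrot : (r : ℂ) * exp ((x + t.arg : ℝ) * I) - t
      = exp (t.arg * I) * ((r : ℂ) * exp (x * I) - ‖t‖) := by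
    nth_rw 2 [← Complex.norm_mul_exp_arg_mul_I t]
    rw [ofReal_add, add_mul, Complex.exp_add]
    ring
  rw [hrot, norm_mul, norm_exp_ofReal_mul_I, one_mul]

theorem sqrt_two_mul_sq_mul_one_sub_cos_le {r s : ℝ} (hr : 0 ≤ r) (hrs : r ≤ √2 * s) (x : ℝ) :
    √2 * r ^ 2 * (1 - Real.cos x) ≤ ‖(r : ℂ) * exp (x * I) - s‖ ^ 2 := by
  have h2 : √2 * √2 = 2 := Real.mul_self_sqrt zero_le_two
  have hcos : 0 ≤ 1 - Real.cos x := sub_nonneg.2 (Real.cos_le_one x)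
  have : √2 * r ≤ 2 * s :=
    calc √2 * r ≤ √2 * (√2 * s) := mul_le_mul_of_nonneg_left hrs (Real.sqrt_nonneg 2)
      _ = 2 * s := by rw [← mul_assoc, h2]
  rw [norm_ofReal_mul_exp_sub_ofReal_sq]
  nlinarith [sq_nonneg (r - s), mul_le_mul_of_nonneg_left this (mul_nonneg hr hcos)]

theorem min_sq_le_one_sub_cos {x : ℝ} (hx0 : 0 ≤ x) (hx : x ≤ 2 * π) :
    2 / π ^ 2 * min x (2 * π - x) ^ 2 ≤ 1 - Real.cos x := by
  rcases le_total x π with hxπ | hxπ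
  · rw [min_eq_left (by linarith)]
    linarith [Real.cos_le_one_sub_mul_cos_sq (abs_le.2 ⟨by linarith [Real.pi_pos], hxπ⟩)]
  · rw [min_eq_right (by linarith)]
    have := Real.cos_le_one_sub_mul_cos_sq (x := x - 2 * π) (abs_le.2 ⟨by linarith, by linarith⟩)
    rw [Real.cos_sub_two_pi, show (x - 2 * π) ^ 2 = (2 * π - x) ^ 2 by ring] at this
    linarith

theorem periodic_norm_ofReal_mul_exp_sub_rpow (r : ℝ) (t : ℂ) (q : ℝ) :
    Function.Periodic (fun φ : ℝ => ‖(r : ℂ) * exp (φ * I) - t‖ ^ q) (2 * π) := by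
  intro φ
  simp [add_mul, Complex.exp_add]

theorem Function.Periodic.intervalIntegral_comp_add_right {E : Type*} [NormedAddCommGroup E]
    [NormedSpace ℝ E] {f : ℝ → E} {T : ℝ} (hf : Function.Periodic f T) (c : ℝ) :
    ∫ x in 0..T, f (x + c) = ∫ x in 0..T, f x := by
  rw [intervalIntegral.integral_comp_add_right, zero_add, add_comm, hf.intervalIntegral_add_eq c 0,
    zero_add]

theorem Function.Periodic.intervalIntegrable_of_comp_add_right {E : Type*} [NormedAddCommGroup E]
    {f : ℝ → E} {T : ℝ} (hf : Function.Periodic f T) (hT : T ≠ 0) (c : ℝ)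
    (h : IntervalIntegrable (fun x => f (x + c)) volume 0 T) (a b : ℝ) :
    IntervalIntegrable f volume a b := by
  refine hf.intervalIntegrable hT (t := c) ?_ a b
  simpa [add_comm c] using h.comp_add_right (-c)

theorem intervalIntegrable_and_integral_rpow_add_rpow_sub {a s : ℝ} (hs : -1 < s) :
    IntervalIntegrable (fun x => x ^ s + (a - x) ^ s) volume 0 a ∧
      ∫ x in 0..a, (x ^ s + (a - x) ^ s) = 2 * (a ^ (s + 1) / (s + 1)) := by
  have hint : IntervalIntegrable (fun x : ℝ => x ^ s) volume 0 a :=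
    intervalIntegral.intervalIntegrable_rpow' hs
  have hint' : IntervalIntegrable (fun x : ℝ => (a - x) ^ s) volume 0 a := by
    simpa using (hint.comp_sub_left a).symm
  refine ⟨hint.add hint', ?_⟩
  rw [intervalIntegral.integral_add hint hint', intervalIntegral.integral_comp_sub_left (· ^ s),
    sub_self, sub_zero, integral_rpow (Or.inl hs), Real.zero_rpow (by linarith)]
  ring

/- Only on the open interval: at `x = 0` the majorant takes the junk value `0 ^ (-(2 * p)) = 0`. -/
theorem norm_ofReal_mul_exp_sub_rpow_le {p r s x : ℝ} (hp : 0 ≤ p) (hr : 0 < r)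
    (hrs : r ≤ √2 * s) (hx : x ∈ Set.Ioo 0 (2 * π)) :
    ‖(r : ℂ) * exp (x * I) - s‖ ^ (-(2 * p))
      ≤ (2 * √2 / π ^ 2) ^ (-p) * r ^ (-(2 * p))
        * (x ^ (-(2 * p)) + (2 * π - x) ^ (-(2 * p))) := by
  obtain ⟨hx0, hx2π⟩ := hx
  set m := min x (2 * π - x) with hm
  have hm0 : 0 < m := lt_min hx0 (by linarith)
  have hlower : 2 * √2 / π ^ 2 * (r * m) ^ 2 ≤ ‖(r : ℂ) * exp (x * I) - s‖ ^ 2 :=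
    calc 2 * √2 / π ^ 2 * (r * m) ^ 2 = √2 * r ^ 2 * (2 / π ^ 2 * m ^ 2) := by ring
      _ ≤ √2 * r ^ 2 * (1 - Real.cos x) := by gcongr; exact min_sq_le_one_sub_cos hx0.le hx2π.le
      _ ≤ _ := sqrt_two_mul_sq_mul_one_sub_cos_le hr.le hrs x
  have hm_le : m ^ (-(2 * p)) ≤ x ^ (-(2 * p)) + (2 * π - x) ^ (-(2 * p)) := by
    rcases min_choice x (2 * π - x) with h | h <;> rw [hm, h]
    · exact le_add_of_nonneg_right (Real.rpow_nonneg (by linarith) _)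
    · exact le_add_of_nonneg_left (Real.rpow_nonneg hx0.le _)
  calc ‖(r : ℂ) * exp (x * I) - s‖ ^ (-(2 * p))
      = (‖(r : ℂ) * exp (x * I) - s‖ ^ 2) ^ (-p) := Real.rpow_neg_two_mul (norm_nonneg _) p
    _ ≤ (2 * √2 / π ^ 2 * (r * m) ^ 2) ^ (-p) :=
        Real.rpow_le_rpow_of_nonpos (by positivity) hlower (by linarith)
    _ = (2 * √2 / π ^ 2) ^ (-p) * r ^ (-(2 * p)) * m ^ (-(2 * p)) := by
        rw [Real.mul_rpow (by positivity) (by positivity), ← Real.rpow_neg_two_mul (by positivity),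
          Real.mul_rpow hr.le hm0.le, mul_assoc]
    _ ≤ _ := by gcongr

/- The constant of `norm_ofReal_mul_exp_sub_rpow_le` times
`∫ x in 0..2π, x ^ (-2p) + (2π - x) ^ (-2p)`. -/
noncomputable def circleConst (p : ℝ) : ℝ :=
  (2 * √2 / π ^ 2) ^ (-p) * (2 * ((2 * π) ^ (-(2 * p) + 1) / (-(2 * p) + 1)))

theorem circleConst_nonneg {p : ℝ} (hp2 : p < 1 / 2) : 0 ≤ circleConst p := by
  have : 0 < -(2 * p) + 1 := by linarith
  unfold circleConst
  positivity

theorem intervalIntegrable_and_integral_norm_ofReal_mul_exp_sub_ofReal_rpow_le {p r s : ℝ}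
    (hp : 0 ≤ p) (hp2 : p < 1 / 2) (hr : 0 < r) (hrs : r ≤ √2 * s) :
    IntervalIntegrable (fun x : ℝ => ‖(r : ℂ) * exp (x * I) - s‖ ^ (-(2 * p))) volume 0 (2 * π) ∧
      ∫ x in 0..2 * π, ‖(r : ℂ) * exp (x * I) - s‖ ^ (-(2 * p))
        ≤ circleConst p * r ^ (-(2 * p)) := by
  obtain ⟨hmaj_int, hmaj⟩ :=
    intervalIntegrable_and_integral_rpow_add_rpow_sub (a := 2 * π) (s := -(2 * p)) (by linarith)
  have hbound := fun x hx => norm_ofReal_mul_exp_sub_rpow_le (s := s) (x := x) hp hr hrs hx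
  have hint : IntervalIntegrable (fun x : ℝ => ‖(r : ℂ) * exp (x * I) - s‖ ^ (-(2 * p)))
      volume 0 (2 * π) := by
    rw [intervalIntegrable_iff_integrableOn_Ioo_of_le two_pi_pos.le] at hmaj_int ⊢
    refine (hmaj_int.const_mul ((2 * √2 / π ^ 2) ^ (-p) * r ^ (-(2 * p)))).mono' ?_
      ((ae_restrict_iff' measurableSet_Ioo).2 (ae_of_all _ fun x hx => ?_))
    · have : Continuous fun x : ℝ => ‖(r : ℂ) * exp (x * I) - s‖ := by fun_prop
      exact (this.measurable.pow_const _).aestronglyMeasurable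
    · rw [Real.norm_of_nonneg (Real.rpow_nonneg (norm_nonneg _) _)]
      exact hbound x hx
  refine ⟨hint, ?_⟩
  calc ∫ x in 0..2 * π, ‖(r : ℂ) * exp (x * I) - s‖ ^ (-(2 * p))
      ≤ ∫ x in 0..2 * π, (2 * √2 / π ^ 2) ^ (-p) * r ^ (-(2 * p))
          * (x ^ (-(2 * p)) + (2 * π - x) ^ (-(2 * p))) :=
        intervalIntegral.integral_mono_on_of_le_Ioo two_pi_pos.le hint (hmaj_int.const_mul _) hbound
    _ = circleConst p * r ^ (-(2 * p)) := by
        rw [intervalIntegral.integral_const_mul, hmaj, circleConst]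
        ring

/- Rotating by `arg t` reduces to a positive real `t`. -/
theorem intervalIntegrable_and_integral_norm_ofReal_mul_exp_sub_rpow_le {p r : ℝ} (hp : 0 ≤ p)
    (hp2 : p < 1 / 2) (hr : 0 < r) {t : ℂ} (ht : r / √2 ≤ ‖t‖) :
    IntervalIntegrable (fun φ : ℝ => ‖(r : ℂ) * exp (φ * I) - t‖ ^ (-(2 * p))) volume 0 (2 * π) ∧
      ∫ φ in 0..2 * π, ‖(r : ℂ) * exp (φ * I) - t‖ ^ (-(2 * p))
        ≤ circleConst p * r ^ (-(2 * p)) := by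
  have hper := periodic_norm_ofReal_mul_exp_sub_rpow r t (-(2 * p))
  have hrot : (fun x : ℝ => ‖(r : ℂ) * exp ((x + t.arg : ℝ) * I) - t‖ ^ (-(2 * p)))
      = fun x : ℝ => ‖(r : ℂ) * exp (x * I) - ‖t‖‖ ^ (-(2 * p)) := by
    simp only [norm_ofReal_mul_exp_add_arg_sub]
  obtain ⟨hint, hle⟩ := intervalIntegrable_and_integral_norm_ofReal_mul_exp_sub_ofReal_rpow_le
    hp hp2 hr ((div_le_iff₀' (by positivity)).1 ht)
  rw [← hrot] at hint hle
  exact ⟨hper.intervalIntegrable_of_comp_add_right two_pi_pos.ne' _ hint _ _,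
    hper.intervalIntegral_comp_add_right t.arg ▸ hle⟩

theorem integral_norm_sum_div_sq_rpow_le {ι : Type*} (s : Finset ι) (c t : ι → ℂ) {p r : ℝ}
    (hp : 0 < p) (hp2 : p < 1 / 2) (hr : 0 < r) (ht : ∀ n ∈ s, r / √2 ≤ ‖t n‖) :
    ∫ φ in 0..2 * π, ‖∑ n ∈ s, c n / ((r : ℂ) * exp (φ * I) - t n) ^ 2‖ ^ p
      ≤ circleConst p * r ^ (-(2 * p)) * ∑ n ∈ s, ‖c n‖ ^ p := by
  have hcircle := fun n hn =>
    intervalIntegrable_and_integral_norm_ofReal_mul_exp_sub_rpow_le hp.le hp2 hr (ht n hn)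
  have hint : ∀ n ∈ s, IntervalIntegrable
      (fun φ : ℝ => ‖c n‖ ^ p * ‖(r : ℂ) * exp (φ * I) - t n‖ ^ (-(2 * p))) volume 0 (2 * π) :=
    fun n hn => (hcircle n hn).1.const_mul _
  calc ∫ φ in 0..2 * π, ‖∑ n ∈ s, c n / ((r : ℂ) * exp (φ * I) - t n) ^ 2‖ ^ p
      ≤ ∫ φ in 0..2 * π, ∑ n ∈ s, ‖c n‖ ^ p * ‖(r : ℂ) * exp (φ * I) - t n‖ ^ (-(2 * p)) := by
        rw [intervalIntegral.integral_of_le two_pi_pos.le,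
          intervalIntegral.integral_of_le two_pi_pos.le]
        refine integral_mono_of_nonneg (ae_of_all _ fun φ => by positivity)
          (integrable_finsetSum s fun n hn => (hint n hn).1) (ae_of_all _ fun φ => ?_)
        exact (norm_sum_rpow_le_sum_norm_rpow s _ hp (by linarith)).trans_eq
          (Finset.sum_congr rfl fun n _ => norm_div_sq_rpow _ _ _)
    _ = ∑ n ∈ s, ‖c n‖ ^ p * ∫ φ in 0..2 * π, ‖(r : ℂ) * exp (φ * I) - t n‖ ^ (-(2 * p)) := by
        simp only [intervalIntegral.integral_finsetSum hint, intervalIntegral.integral_const_mul]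
    _ ≤ ∑ n ∈ s, ‖c n‖ ^ p * (circleConst p * r ^ (-(2 * p))) :=
        Finset.sum_le_sum fun n hn => by gcongr; exact (hcircle n hn).2
    _ = circleConst p * r ^ (-(2 * p)) * ∑ n ∈ s, ‖c n‖ ^ p := by
        rw [Finset.mul_sum]; simp only [mul_comm]

theorem integral_norm_tsum_window_le {c t : ℕ → ℂ} {M ρ p r : ℝ} (hM : ∀ n, ‖c n‖ / ‖t n‖ ≤ M)
    (hρ : Summable fun n => 1 / ‖t n‖ ^ (ρ + 1)) (hρ1 : 0 ≤ ρ + 1) (hp : 0 < p) (hp2 : p < 1 / 2)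
    (hr : 0 < r) (hfin : {n | ‖t n‖ ≤ r * √2}.Finite) :
    ∫ φ in (0:ℝ)..(2 * π),
        ‖∑' n, if r / √2 ≤ ‖t n‖ ∧ ‖t n‖ ≤ r * √2 then
          c n / ((r : ℂ) * exp ((φ : ℂ) * I) - t n) ^ 2 else 0‖ ^ p
      ≤ circleConst p * (M * √2) ^ p * √2 ^ (ρ + 1) * r ^ (ρ + 1 - p)
        * ∑' n, if r / √2 ≤ ‖t n‖ then 1 / ‖t n‖ ^ (ρ + 1) else 0 := by
  set S := hfin.toFinset.filter fun n => r / √2 ≤ ‖t n‖ ∧ ‖t n‖ ≤ r * √2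
  have hS : ∀ n ∈ S, r / √2 ≤ ‖t n‖ ∧ ‖t n‖ ≤ r * √2 := fun n hn => (Finset.mem_filter.1 hn).2
  have htsum : ∀ φ : ℝ, (∑' n, if r / √2 ≤ ‖t n‖ ∧ ‖t n‖ ≤ r * √2 then
      c n / ((r : ℂ) * exp ((φ : ℂ) * I) - t n) ^ 2 else 0)
        = ∑ n ∈ S, c n / ((r : ℂ) * exp ((φ : ℂ) * I) - t n) ^ 2 := fun φ => by
    rw [tsum_eq_sum (s := hfin.toFinset) fun n hn => if_neg fun h => hn (hfin.mem_toFinset.2 h.2),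
      Finset.sum_filter]
  have hM0 : 0 ≤ M := (div_nonneg (norm_nonneg _) (norm_nonneg _)).trans (hM 0)
  have hcoef : ∀ n ∈ S,
      ‖c n‖ ^ p ≤ (M * (r * √2)) ^ p * (r * √2) ^ (ρ + 1) * (1 / ‖t n‖ ^ (ρ + 1)) := by
    intro n hn
    obtain ⟨hlo, hhi⟩ := hS n hn
    have htn : 0 < ‖t n‖ := lt_of_lt_of_le (by positivity) hlo
    have hc : ‖c n‖ ≤ M * (r * √2) := ((div_le_iff₀' htn).1 (hM n)).trans (by
      rw [mul_comm]; gcongr)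
    have hcount : 1 ≤ (r * √2) ^ (ρ + 1) * (1 / ‖t n‖ ^ (ρ + 1)) := by
      rw [mul_one_div, one_le_div (by positivity)]
      exact Real.rpow_le_rpow htn.le hhi hρ1
    calc ‖c n‖ ^ p ≤ (M * (r * √2)) ^ p := Real.rpow_le_rpow (norm_nonneg _) hc hp.le
      _ ≤ _ := by rw [mul_assoc]; exact le_mul_of_one_le_right (by positivity) hcount
  have htail : ∑ n ∈ S, 1 / ‖t n‖ ^ (ρ + 1)
      ≤ ∑' n, if r / √2 ≤ ‖t n‖ then 1 / ‖t n‖ ^ (ρ + 1) else 0 :=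
    calc ∑ n ∈ S, 1 / ‖t n‖ ^ (ρ + 1)
        = ∑ n ∈ S, if r / √2 ≤ ‖t n‖ then 1 / ‖t n‖ ^ (ρ + 1) else 0 :=
          Finset.sum_congr rfl fun n hn => (if_pos (hS n hn).1).symm
      _ ≤ _ := Summable.sum_le_tsum S (fun n _ => by positivity)
          (hρ.of_nonneg_of_le (fun n => by positivity) fun n => by
            split_ifs; exacts [le_rfl, by positivity])
  have hscale : circleConst p * r ^ (-(2 * p)) * ((M * (r * √2)) ^ p * (r * √2) ^ (ρ + 1))
      = circleConst p * (M * √2) ^ p * √2 ^ (ρ + 1) * r ^ (ρ + 1 - p) := by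
    have hpow : r ^ (-(2 * p)) * r ^ p * r ^ (ρ + 1) = r ^ (ρ + 1 - p) := by
      rw [← Real.rpow_add hr, ← Real.rpow_add hr]
      ring_nf
    rw [show M * (r * √2) = M * √2 * r by ring, Real.mul_rpow (by positivity) hr.le,
      Real.mul_rpow hr.le (Real.sqrt_nonneg 2), ← hpow]
    ring
  have hC := circleConst_nonneg hp2
  simp only [htsum]
  calc _ ≤ circleConst p * r ^ (-(2 * p)) * ∑ n ∈ S, ‖c n‖ ^ p :=
        integral_norm_sum_div_sq_rpow_le S c t hp hp2 hr fun n hn => (hS n hn).1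
    _ ≤ circleConst p * r ^ (-(2 * p))
          * ∑ n ∈ S, (M * (r * √2)) ^ p * (r * √2) ^ (ρ + 1) * (1 / ‖t n‖ ^ (ρ + 1)) := by
        gcongr with n hn; exact hcoef n hn
    _ = circleConst p * (M * √2) ^ p * √2 ^ (ρ + 1) * r ^ (ρ + 1 - p)
          * ∑ n ∈ S, 1 / ‖t n‖ ^ (ρ + 1) := by
        rw [← Finset.mul_sum, ← mul_assoc, hscale]
    _ ≤ _ := by gcongr

theorem middle_trivial_estimate_general (c t : ℕ → ℂ) (ρ : ℝ)
    (hlim : Tendsto (fun n => ‖t n‖) atTop atTop)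
    (hρ : Summable (fun n => 1 / ‖t n‖ ^ (ρ + 1)))
    (hsup : BddAbove (Set.range fun n => ‖c n‖ / ‖t n‖))
    (p : ℝ) (hp : 0 < p) (hp2 : p < 1 / 2) :
    (fun r : ℝ =>
        ∫ φ in (0:ℝ)..(2 * π),
          ‖∑' n,
            if r / Real.sqrt 2 ≤ ‖t n‖ ∧ ‖t n‖ ≤ r * Real.sqrt 2 then
              c n / ((r : ℂ) * Complex.exp ((φ : ℂ) * Complex.I) - t n) ^ 2 else 0‖ ^ p)
      =o[atTop] fun r : ℝ => r ^ (ρ + 1 - p) := by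
  obtain ⟨M, hM⟩ := hsup
  have hρ1 : 0 < ρ + 1 := pos_of_summable_one_div_rpow hlim hρ
  have hfin : ∀ R, {n | ‖t n‖ ≤ R}.Finite := fun R => by
    have := hlim.eventually_gt_atTop R
    rw [← Nat.cofinite_eq_atTop, Filter.eventually_cofinite] at this
    simpa only [not_lt] using this
  have htail : Tendsto (fun r : ℝ => ∑' n, if r / √2 ≤ ‖t n‖ then 1 / ‖t n‖ ^ (ρ + 1) else 0)
      atTop (𝓝 0) :=
    (hρ.tendsto_tsum_ite_le_zero _).comp (tendsto_id.atTop_div_const (by positivity))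
  set K := circleConst p * (M * √2) ^ p * √2 ^ (ρ + 1)
  refine Asymptotics.IsBigO.trans_isLittleO (g := fun r : ℝ =>
      K * r ^ (ρ + 1 - p) * ∑' n, if r / √2 ≤ ‖t n‖ then 1 / ‖t n‖ ^ (ρ + 1) else 0)
    (Asymptotics.IsBigO.of_bound' ?_) ?_
  · filter_upwards [eventually_gt_atTop 0] with r hr
    rw [Real.norm_of_nonneg
      (intervalIntegral.integral_nonneg two_pi_pos.le fun _ _ => by positivity)]
    exact (integral_norm_tsum_window_le (fun n => hM ⟨n, rfl⟩) hρ hρ1.le hp hp2 hr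
      (hfin _)).trans (le_abs_self _)
  · exact (((Asymptotics.isLittleO_one_iff ℝ).2 htail).mul_isBigO
      ((Asymptotics.isBigO_refl (fun r : ℝ => r ^ (ρ + 1 - p)) atTop).const_mul_left K)).congr
      (fun r => mul_comm _ _) (fun r => one_mul _)

theorem middle_trivial_estimate (c t : ℕ → ℂ) (ρ : ℝ)
    (hlim : Tendsto (fun n => ‖t n‖) atTop atTop)
    (hcl : ∀ z : ℂ, ¬ MapClusterPt z atTop t)
    (hρ : Summable (fun n => 1 / ‖t n‖ ^ (ρ + 1)))
    (hsup : BddAbove (Set.range fun n => ‖c n‖ / ‖t n‖))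
    (p : ℝ) (hp : 0 < p) (hp2 : p < 1 / 2) :
    (fun r : ℝ =>
        ∫ φ in (0:ℝ)..(2 * π),
          ‖∑' n,
            if r / Real.sqrt 2 ≤ ‖t n‖ ∧ ‖t n‖ ≤ r * Real.sqrt 2 then
              c n / ((r : ℂ) * Complex.exp ((φ : ℂ) * Complex.I) - t n) ^ 2 else 0‖ ^ p)
      =o[atTop] fun r : ℝ => r ^ (ρ + 1 - p) :=
  middle_trivial_estimate_general c t ρ hlim hρ hsup p hp hp2
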